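/- Assume η² > ζ² + ι²/β², set c = ((β²η² − ι²)/(β²ζ²) − 1)^{−1}, assume c < β(β²η² − ι²)^{−1/2}, and let N_thresh > 0 satisfy N_thresh^{−p} = ((β²η² − ι²)/(β²ζ²) − 1)^p β^{2p} (β²η² − ι²)^{−p} − β^p (β²η² − ι²)^{−p/2}. For N > N_thresh let x_N ∈ (0,1) be the unique solution of f_N(x_N) = c, and set A = 1/ζ² − β²/(β²η² − ι²) > 0. Then x_N converges, as N → ∞, to (A² + A)^{−1/2}/ζ. (Equivalently, the bifurcating shear angle θ̂(N) = arccos x_N converges to arccos((A² + A)^{−1/2}/ζ) as N → ∞.) -/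

import Mathlib

/-!
Put `B = β²/(β²η² − ι²)`, so that `A + B = 1/ζ²` and
`f_N(x) = (N^{-p} + g(x)^{p/2})^{-1/p} B x` with `g(x) = A(1 − x²) + B > 0` on `[0,1]`.
As `N → ∞`, `f_N` increases pointwise to `f_∞(x) = B x g(x)^{-1/2}`, and every `f_N` is
increasing on `[0,1]`. The hypotheses say `c = B/A` and `B < A²`, and `f_∞(x₀) = B/A` exactly at
`x₀ = (A² + A)^{-1/2}/ζ < 1`, where `g(x₀) = (A x₀)²`. So `f_N(x₀) < c = f_N(x_N)` forces
`x_N > x₀`, while for `y > x₀` eventually `f_N(y) > f_∞(x₀) = c`, forcing `x_N < y`.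
-/

open Filter

/-- The function
`f_N(x) = [N^{−p} + ((1/ζ²)(1−x²) + (β²/(β²η² − ι²)) x²)^{p/2}]^{−1/p} · (β²/(β²η² − ι²)) x`. -/
noncomputable def fN (p β ζ η ι N x : ℝ) : ℝ :=
  (N ^ (-p) + ((1 / ζ ^ 2) * (1 - x ^ 2)
      + (β ^ 2 / (β ^ 2 * η ^ 2 - ι ^ 2)) * x ^ 2) ^ (p / 2)) ^ (-(1 / p))
    * (β ^ 2 / (β ^ 2 * η ^ 2 - ι ^ 2)) * x

open Set Topology

theorem mul_rpow_neg_half_eq_sqrt {b D : ℝ} (hb : 0 ≤ b) (hD : 0 ≤ D) :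
    b * D ^ (-(1 / 2) : ℝ) = √(b ^ 2 / D) := by
  rw [Real.sqrt_div' _ hD, Real.sqrt_sq hb, Real.rpow_neg hD, Real.sqrt_eq_rpow]
  exact (div_eq_mul_inv _ _).symm

theorem lt_sq_of_div_lt_sqrt {A B : ℝ} (hA : 0 < A) (hB : 0 < B) (h : B / A < √B) :
    B < A ^ 2 := by
  rw [Real.lt_sqrt (by positivity), div_pow, div_lt_iff₀ (by positivity)] at h
  nlinarith

theorem rpow_neg_half_div_sq_mul {s : ℝ} (hs : 0 < s) (z : ℝ) :
    (s ^ (-(1 / 2) : ℝ) / z) ^ 2 * s = 1 / z ^ 2 := by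
  rw [div_pow, ← Real.rpow_natCast, ← Real.rpow_mul hs.le,
    show -(1 / 2) * ((2 : ℕ) : ℝ) = -1 by norm_num, Real.rpow_neg_one]
  field_simp

theorem tendsto_of_monotoneOn_of_eq {ι α β : Type*} [LinearOrder α] [TopologicalSpace α]
    [OrderTopology α] [Preorder β] {l : Filter ι} {f : ι → α → β} {x : ι → α} {a b x₀ : α}
    {c : β} (hx₀ : x₀ ∈ Ico a b) (hmono : ∀ᶠ i in l, MonotoneOn (f i) (Icc a b))
    (hx : ∀ᶠ i in l, x i ∈ Icc a b ∧ f i (x i) = c) (hlow : ∀ᶠ i in l, f i x₀ < c)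
    (hup : ∀ y ∈ Ioc x₀ b, ∀ᶠ i in l, c < f i y) :
    Tendsto x l (𝓝 x₀) := by
  refine tendsto_order.2 ⟨fun a' ha' => ?_, fun b' hb' => ?_⟩
  · filter_upwards [hmono, hx, hlow] with i hm ⟨hxi, hfx⟩ hlt
    refine ha'.trans (lt_of_not_ge fun hle => ?_)
    exact (hfx ▸ hm hxi (Ico_subset_Icc_self hx₀) hle).not_gt hlt
  · have hy : min b' b ∈ Ioc x₀ b := ⟨lt_min hb' hx₀.2, min_le_right _ _⟩
    filter_upwards [hmono, hx, hup _ hy] with i hm ⟨hxi, hfx⟩ hlt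
    refine lt_of_lt_of_le (lt_of_not_ge fun hle => ?_) (min_le_left b' b)
    exact (hfx ▸ hm ⟨hx₀.1.trans hy.1.le, hy.2⟩ hxi hle).not_gt hlt

noncomputable def shearProfile (p A B ε x : ℝ) : ℝ :=
  (ε + (A * (1 - x ^ 2) + B) ^ (p / 2)) ^ (-(1 / p)) * B * x

theorem fN_eq_shearProfile (p β ζ η ι N x : ℝ) :
    fN p β ζ η ι N x = shearProfile p (1 / ζ ^ 2 - β ^ 2 / (β ^ 2 * η ^ 2 - ι ^ 2))
      (β ^ 2 / (β ^ 2 * η ^ 2 - ι ^ 2)) (N ^ (-p)) x := by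
  rw [fN, shearProfile]
  ring_nf

section ShearProfile

variable {p A B ε x : ℝ}

theorem mul_one_sub_sq_add_pos (hA : 0 ≤ A) (hB : 0 < B) (hx : x ∈ Icc 0 1) :
    0 < A * (1 - x ^ 2) + B :=
  add_pos_of_nonneg_of_pos (mul_nonneg hA (by nlinarith [hx.1, hx.2])) hB

theorem shearProfile_strictMonoOn (hp : 0 < p) (hA : 0 ≤ A) (hB : 0 < B) (hε : 0 ≤ ε) :
    StrictMonoOn (shearProfile p A B ε) (Icc 0 1) := by
  intro x hx y hy hxy
  have hgy := mul_one_sub_sq_add_pos hA hB hy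
  have hgyx : A * (1 - y ^ 2) + B ≤ A * (1 - x ^ 2) + B := by
    have : x ^ 2 ≤ y ^ 2 := pow_le_pow_left₀ hx.1 hxy.le 2
    nlinarith
  have hdeny : 0 < ε + (A * (1 - y ^ 2) + B) ^ (p / 2) :=
    add_pos_of_nonneg_of_pos hε (Real.rpow_pos_of_pos hgy _)
  have hden : ε + (A * (1 - y ^ 2) + B) ^ (p / 2) ≤ ε + (A * (1 - x ^ 2) + B) ^ (p / 2) :=
    add_le_add_right (Real.rpow_le_rpow hgy.le hgyx (by positivity)) ε
  have hfac : (ε + (A * (1 - x ^ 2) + B) ^ (p / 2)) ^ (-(1 / p))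
      ≤ (ε + (A * (1 - y ^ 2) + B) ^ (p / 2)) ^ (-(1 / p)) :=
    Real.rpow_le_rpow_of_nonpos hdeny hden (by simp [hp.le])
  calc shearProfile p A B ε x
      ≤ (ε + (A * (1 - y ^ 2) + B) ^ (p / 2)) ^ (-(1 / p)) * B * x := by
        rw [shearProfile]; gcongr; exact hx.1
    _ < shearProfile p A B ε y := by
        rw [shearProfile]; gcongr

theorem shearProfile_lt_shearProfile_zero (hp : 0 < p) (hA : 0 ≤ A) (hB : 0 < B) (hε : 0 < ε)
    (hx : x ∈ Ioc 0 1) : shearProfile p A B ε x < shearProfile p A B 0 x := by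
  have hg := mul_one_sub_sq_add_pos hA hB (Ioc_subset_Icc_self hx)
  have hfac : (ε + (A * (1 - x ^ 2) + B) ^ (p / 2)) ^ (-(1 / p))
      < (0 + (A * (1 - x ^ 2) + B) ^ (p / 2)) ^ (-(1 / p)) :=
    Real.rpow_lt_rpow_of_neg (by positivity) (by linarith) (by simp [hp])
  rw [shearProfile, shearProfile]
  gcongr
  exact hx.1

theorem tendsto_shearProfile_zero (hA : 0 ≤ A) (hB : 0 < B) (hx : x ∈ Icc 0 1) :
    Tendsto (fun ε => shearProfile p A B ε x) (𝓝 0) (𝓝 (shearProfile p A B 0 x)) := by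
  have hg := mul_one_sub_sq_add_pos hA hB hx
  refine ContinuousAt.tendsto ?_
  unfold shearProfile
  refine (((continuousAt_id.add continuousAt_const).rpow_const (Or.inl ?_)).mul
    continuousAt_const).mul continuousAt_const
  simpa using (Real.rpow_pos_of_pos hg _).ne'

theorem shearProfile_zero_eq_div (hp : p ≠ 0) (hA : 0 < A) (hx : 0 < x)
    (hsq : x ^ 2 * (A ^ 2 + A) = A + B) : shearProfile p A B 0 x = B / A := by
  have hg : A * (1 - x ^ 2) + B = (A * x) ^ 2 := by linear_combination -hsq
  have hAx : 0 < A * x := mul_pos hA hx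
  rw [shearProfile, zero_add, hg, ← Real.rpow_natCast, ← Real.rpow_mul hAx.le,
    ← Real.rpow_mul hAx.le, show ((2 : ℕ) : ℝ) * (p / 2) * -(1 / p) = -1 by push_cast; field_simp, Real.rpow_neg_one]
  field_simp

end ShearProfile

theorem tendsto_of_shearProfile_eq_div {p A B x₀ : ℝ} {x : ℝ → ℝ} (hp : 0 < p) (hA : 0 < A)
    (hB : 0 < B) (hBA : B < A ^ 2) (hx₀ : 0 < x₀) (hx₀sq : x₀ ^ 2 * (A ^ 2 + A) = A + B)
    (hx : ∀ᶠ N in atTop, x N ∈ Icc 0 1 ∧ shearProfile p A B (N ^ (-p)) (x N) = B / A) :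
    Tendsto x atTop (𝓝 x₀) := by
  have hx₀1 : x₀ < 1 := by
    have : x₀ ^ 2 < 1 ^ 2 := by nlinarith [mul_pos hA hA]
    exact lt_of_pow_lt_pow_left₀ 2 zero_le_one this
  have hc : shearProfile p A B 0 x₀ = B / A := shearProfile_zero_eq_div hp.ne' hA hx₀ hx₀sq
  refine tendsto_of_monotoneOn_of_eq ⟨hx₀.le, hx₀1⟩ ?_ hx ?_ fun y hy => ?_
  · filter_upwards [eventually_ge_atTop 0] with N hN
    exact (shearProfile_strictMonoOn hp hA.le hB (Real.rpow_nonneg hN _)).monotoneOn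
  · filter_upwards [eventually_gt_atTop 0] with N hN
    exact hc ▸ shearProfile_lt_shearProfile_zero hp hA.le hB (Real.rpow_pos_of_pos hN _)
      ⟨hx₀, hx₀1.le⟩
  · have hy' : y ∈ Icc 0 1 := ⟨hx₀.le.trans hy.1.le, hy.2⟩
    have hlim := (tendsto_shearProfile_zero (p := p) hA.le hB hy').comp (tendsto_rpow_neg_atTop hp)
    exact hlim.eventually_const_lt
      (hc ▸ shearProfile_strictMonoOn hp hA.le hB le_rfl ⟨hx₀.le, hx₀1.le⟩ hy' hy.1)

theorem shear_angle_limit_general (p β ζ η ι : ℝ) (hp : 0 < p) (hβ : 0 < β) (hζ : 0 < ζ)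
    (hβηι : 0 < β ^ 2 * η ^ 2 - ι ^ 2)
    (hmat : ζ ^ 2 + ι ^ 2 / β ^ 2 < η ^ 2)
    (c : ℝ) (hc : c = ((β ^ 2 * η ^ 2 - ι ^ 2) / (β ^ 2 * ζ ^ 2) - 1)⁻¹)
    (hcsmall : c < β * (β ^ 2 * η ^ 2 - ι ^ 2) ^ (-(1 / 2) : ℝ))
    (Nthresh : ℝ)
    (x : ℝ → ℝ)
    (hx : ∀ N : ℝ, Nthresh < N → x N ∈ Set.Ioo (0 : ℝ) 1 ∧ fN p β ζ η ι N (x N) = c)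
    (A : ℝ) (hA : A = 1 / ζ ^ 2 - β ^ 2 / (β ^ 2 * η ^ 2 - ι ^ 2)) :
    Tendsto x atTop (nhds ((A ^ 2 + A) ^ (-(1 / 2) : ℝ) / ζ)) := by
  set B := β ^ 2 / (β ^ 2 * η ^ 2 - ι ^ 2) with hB_def
  have hB : 0 < B := by positivity
  have hApos : 0 < A := by
    have := mul_lt_mul_of_pos_left hmat (pow_pos hβ 2)
    rw [hA, sub_pos, div_lt_div_iff₀ hβηι (by positivity)]
    field_simp at this
    linarith
  have hcBA : c = B / A := by
    rw [hc, hA, hB_def]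
    field_simp
  have hBA : B < A ^ 2 := by
    rw [hcBA, mul_rpow_neg_half_eq_sqrt hβ.le hβηι.le] at hcsmall
    exact lt_sq_of_div_lt_sqrt hApos hB hcsmall
  have hAA : 0 < A ^ 2 + A := by positivity
  refine tendsto_of_shearProfile_eq_div hp hApos hB hBA
    (div_pos (Real.rpow_pos_of_pos hAA _) hζ) ?_ ?_
  · rw [rpow_neg_half_div_sq_mul hAA, hA]
    ring
  · filter_upwards [eventually_gt_atTop Nthresh] with N hN
    obtain ⟨hxN, hfx⟩ := hx N hN
    rw [fN_eq_shearProfile, ← hA, hcBA] at hfx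
    exact ⟨Ioo_subset_Icc_self hxN, hfx⟩

/-- limiting shear angle. With `A = 1/ζ² − β²/(β²η² − ι²) > 0`, the
solutions `x_N ∈ (0,1)` of `f_N(x_N) = c` for `N > N_thresh` converge, as `N → ∞`, to
`(A² + A)^{−1/2}/ζ`. -/
theorem shear_angle_limit (p β ζ η ι : ℝ) (hp : 0 < p) (hβ : 0 < β) (hζ : 0 < ζ)
    (hη : 0 < η) (hβηι : 0 < β ^ 2 * η ^ 2 - ι ^ 2)
    (hmat : ζ ^ 2 + ι ^ 2 / β ^ 2 < η ^ 2)
    (c : ℝ) (hc : c = ((β ^ 2 * η ^ 2 - ι ^ 2) / (β ^ 2 * ζ ^ 2) - 1)⁻¹)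
    (hcsmall : c < β * (β ^ 2 * η ^ 2 - ι ^ 2) ^ (-(1 / 2) : ℝ))
    (Nthresh : ℝ) (hNt : 0 < Nthresh)
    (hNtdef : Nthresh ^ (-p)
      = ((β ^ 2 * η ^ 2 - ι ^ 2) / (β ^ 2 * ζ ^ 2) - 1) ^ p * β ^ (2 * p)
          * (β ^ 2 * η ^ 2 - ι ^ 2) ^ (-p)
        - β ^ p * (β ^ 2 * η ^ 2 - ι ^ 2) ^ (-(p / 2)))
    (x : ℝ → ℝ)
    (hx : ∀ N : ℝ, Nthresh < N → x N ∈ Set.Ioo (0 : ℝ) 1 ∧ fN p β ζ η ι N (x N) = c)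
    (A : ℝ) (hA : A = 1 / ζ ^ 2 - β ^ 2 / (β ^ 2 * η ^ 2 - ι ^ 2)) :
    Tendsto x atTop (nhds ((A ^ 2 + A) ^ (-(1 / 2) : ℝ) / ζ)) :=
  shear_angle_limit_general p β ζ η ι hp hβ hζ hβηι hmat c hc hcsmall Nthresh x hx A hA
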